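/- Consider the binomial lattice y^n_k = (√Y₀ + (σ/2)(2k−n)√h)² · 1_{√Y₀ + (σ/2)(2k−n)√h > 0} for 0 ≤ k ≤ n, with Y₀, σ > 0, h > 0. Then for all n,k: (i) y^n_k ≤ y^n_{k+1}; (ii) y^{n+1}_k ≤ y^n_k ≤ y^{n+1}_{k+1}; (iii) y^n_k ≤ y^n_{k−1} + σ²h + 2σ√(y^n_{k−1} h); (iv) y^{n+1}_k ≤ y^n_k + (σ²/4)h − σ√(y^n_k h). -/

import Mathlib

open Real

/-- The node values of the CIR binomial lattice:
y^n_k = (√Y₀ + (σ/2)(2k−n)√h)² if √Y₀ + (σ/2)(2k−n)√h > 0, and 0 otherwise. -/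
noncomputable def latticeY (Y₀ σ h : ℝ) (n k : ℕ) : ℝ :=
  if 0 < Real.sqrt Y₀ + σ / 2 * (2 * (k : ℝ) - (n : ℝ)) * Real.sqrt h then
    (Real.sqrt Y₀ + σ / 2 * (2 * (k : ℝ) - (n : ℝ)) * Real.sqrt h) ^ 2
  else 0

/-! Every node is `y = x⁺²` for a point `x` of the affine grid `√Y₀ + (σ/2)(2k − n)√h`, and
`√(y h) = x⁺ √h`. Moving one node up (`k ↦ k + 1`) shifts `x` by `σ√h`, one time step
(`n ↦ n + 1`) by `−σ√h/2`, and the diagonal step by `+σ√h/2`. So (i)–(ii) are the monotonicity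
of `x ↦ x⁺²`, and (iii)–(iv) are the bounds `(x + c)⁺² ≤ (x⁺ + c)²` and `(x − c)⁺² ≤ (x⁺ − c)²`
for `c ≥ 0`, expanded. -/

section PosPart

variable {α : Type*} [Ring α] [LinearOrder α] [IsStrictOrderedRing α]

theorem monotone_sq_posPart : Monotone fun a : α => a⁺ ^ 2 := fun _ _ hab =>
  pow_le_pow_left₀ (posPart_nonneg _) (posPart_mono hab) 2

theorem posPart_add_le_posPart_add {c : α} (hc : 0 ≤ c) (a : α) : (a + c)⁺ ≤ a⁺ + c :=
  sup_le (add_le_add_left (le_posPart a) c) (add_nonneg (posPart_nonneg a) hc)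

theorem sq_posPart_add_le {c : α} (hc : 0 ≤ c) (a : α) : (a + c)⁺ ^ 2 ≤ (a⁺ + c) ^ 2 :=
  pow_le_pow_left₀ (posPart_nonneg _) (posPart_add_le_posPart_add hc a) 2

theorem sq_posPart_sub_le {c : α} (hc : 0 ≤ c) (a : α) : (a - c)⁺ ^ 2 ≤ (a⁺ - c) ^ 2 := by
  rcases le_or_gt (a - c) 0 with hneg | hpos
  · rw [posPart_eq_zero.mpr hneg, sq, zero_mul]
    exact sq_nonneg _
  · rw [posPart_eq_self.mpr hpos.le, posPart_eq_self.mpr (hc.trans (sub_pos.mp hpos).le)]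

end PosPart

section Lattice

variable (Y₀ σ h : ℝ)

noncomputable def latticeRoot (n k : ℕ) : ℝ :=
  Real.sqrt Y₀ + σ / 2 * (2 * (k : ℝ) - (n : ℝ)) * Real.sqrt h

theorem latticeY_eq_sq_posPart (n k : ℕ) :
    latticeY Y₀ σ h n k = (latticeRoot Y₀ σ h n k)⁺ ^ 2 := by
  rw [latticeY, posPart_eq_ite_lt, ite_pow, zero_pow two_ne_zero, latticeRoot]

theorem sqrt_latticeY_mul (n k : ℕ) :
    Real.sqrt (latticeY Y₀ σ h n k * h) = (latticeRoot Y₀ σ h n k)⁺ * Real.sqrt h := by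
  rw [latticeY_eq_sq_posPart, Real.sqrt_mul (sq_nonneg _), Real.sqrt_sq (posPart_nonneg _)]

theorem latticeRoot_succ_right (n k : ℕ) :
    latticeRoot Y₀ σ h n (k + 1) = latticeRoot Y₀ σ h n k + σ * Real.sqrt h := by
  simp only [latticeRoot]; push_cast; ring

theorem latticeRoot_succ_left (n k : ℕ) :
    latticeRoot Y₀ σ h (n + 1) k = latticeRoot Y₀ σ h n k - σ / 2 * Real.sqrt h := by
  simp only [latticeRoot]; push_cast; ring

end Lattice

theorem latticeY_basic_inequalities
    (Y₀ σ h : ℝ) (hσ : 0 < σ) (hh : 0 < h) (n k : ℕ) :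
    latticeY Y₀ σ h n k ≤ latticeY Y₀ σ h n (k + 1) ∧
    latticeY Y₀ σ h (n + 1) k ≤ latticeY Y₀ σ h n k ∧
    latticeY Y₀ σ h n k ≤ latticeY Y₀ σ h (n + 1) (k + 1) ∧
    latticeY Y₀ σ h n (k + 1) ≤
      latticeY Y₀ σ h n k + σ ^ 2 * h + 2 * σ * Real.sqrt (latticeY Y₀ σ h n k * h) ∧
    latticeY Y₀ σ h (n + 1) k ≤
      latticeY Y₀ σ h n k + σ ^ 2 / 4 * h - σ * Real.sqrt (latticeY Y₀ σ h n k * h) := by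
  rw [sqrt_latticeY_mul]
  simp only [latticeY_eq_sq_posPart, latticeRoot_succ_right, latticeRoot_succ_left]
  set x := latticeRoot Y₀ σ h n k
  have hsq : Real.sqrt h ^ 2 = h := Real.sq_sqrt hh.le
  have hstep : 0 ≤ σ / 2 * Real.sqrt h := by positivity
  refine ⟨monotone_sq_posPart (by linarith), monotone_sq_posPart (by linarith),
    monotone_sq_posPart (by linarith), ?_, ?_⟩
  · calc (x + σ * √h)⁺ ^ 2 ≤ (x⁺ + σ * √h) ^ 2 := sq_posPart_add_le (by linarith) x
      _ = x⁺ ^ 2 + σ ^ 2 * h + 2 * σ * (x⁺ * √h) := by linear_combination σ ^ 2 * hsq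
  · calc (x - σ / 2 * √h)⁺ ^ 2 ≤ (x⁺ - σ / 2 * √h) ^ 2 := sq_posPart_sub_le hstep x
      _ = x⁺ ^ 2 + σ ^ 2 / 4 * h - σ * (x⁺ * √h) := by linear_combination σ ^ 2 / 4 * hsq
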